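/- arXiv:1102.2232 — 3 statements merged into one kernel-verified Lean document; each statement's English description precedes it below -/
import Mathlib

section
/- Let Σ be a finite alphabet and let w : ℤ → Σ be a recurrent ℤ-word. Then there exists b : ℤ → {0,1} such that the ℤ-word w' over the alphabet Σ × {0,1} defined by w'(i) = (w(i), b(i)) has the following property (*): for every finite word u over Σ that occurs in every prefix and every suffix of w, every finite word u' over Σ × {0,1} whose letterwise projection to Σ equals u occurs in every prefix and every suffix of w'. -/
/-!
Enumerate all requests `(u', n, side)`. Serve them one at a time: put `u'` at an occurrence of its
projection in `w` that lies beyond `n` on the requested side and also beyond every block placed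
so far (possible because the projection occurs in every prefix and every suffix). The blocks are
then pairwise disjoint, so the bits of the words placed in them define `b` consistently.
-/


/-- The finite word `u` occurs at position `i` in the `ℤ`-word `w`. -/
def OccursAt {σ : Type*} (w : ℤ → σ) (u : List σ) (i : ℤ) : Prop :=
  ∀ k : Fin u.length, w (i + (k : ℕ)) = u.get k

/-- The finite word `u` occurs in the `ℤ`-word `w`. -/
def OccursIn {σ : Type*} (w : ℤ → σ) (u : List σ) : Prop :=
  ∃ i : ℤ, OccursAt w u i

/-- `u` occurs in every prefix of `w`. -/
def InEveryPrefix {σ : Type*} (w : ℤ → σ) (u : List σ) : Prop :=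
  ∀ n : ℤ, ∃ i : ℤ, i + u.length ≤ n ∧ OccursAt w u i

/-- `u` occurs in every suffix of `w`. -/
def InEverySuffix {σ : Type*} (w : ℤ → σ) (u : List σ) : Prop :=
  ∀ n : ℤ, ∃ i : ℤ, n ≤ i ∧ OccursAt w u i

/-- A `ℤ`-word `w` is recurrent: for every regular language `X`, either no element
of `X` occurs in `w`, or every prefix and every suffix of `w` contains an
occurrence of some element of `X`. -/
def Recurrent {σ : Type*} (w : ℤ → σ) : Prop :=
  ∀ X : Language σ, X.IsRegular →
    (∀ u ∈ X, ¬ OccursIn w u) ∨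
    (∀ n : ℤ, (∃ u ∈ X, ∃ i : ℤ, i + u.length ≤ n ∧ OccursAt w u i) ∧
              (∃ u ∈ X, ∃ i : ℤ, n ≤ i ∧ OccursAt w u i))

section DisjointBlocks

variable (place : ℕ → ℕ → ℤ) (m : ℕ → ℕ)

/-- Every position covered by the blocks of stages `< t` has absolute value below
`blockRadius place m t`; stage `t` puts its block of length `m t` at `place t (blockRadius place m t)`,
which lies outside that radius. -/
def blockRadius : ℕ → ℕ
  | 0 => 0
  | t + 1 => blockRadius t + (place t (blockRadius t)).natAbs + m t

lemma blockRadius_mono : Monotone (blockRadius place m) :=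
  monotone_nat_of_le_succ fun t => by simp only [blockRadius]; omega

variable {place m}

lemma place_add_ne_of_lt (hfar : ∀ t r, ∀ k < m t, r ≤ (place t r + k).natAbs)
    {t t' : ℕ} (htt' : t < t') {k k' : ℕ} (hk : k < m t) (hk' : k' < m t') :
    place t (blockRadius place m t) + k ≠ place t' (blockRadius place m t') + k' := by
  have hin : (place t (blockRadius place m t) + k).natAbs < blockRadius place m (t + 1) := by
    simp only [blockRadius]; omega
  have hmono := blockRadius_mono place m (show t + 1 ≤ t' from htt')
  have hout := hfar t' (blockRadius place m t') k' hk'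
  omega

end DisjointBlocks

theorem exists_pairwise_disjoint_blocks {P : ℕ → ℤ → Prop} (m : ℕ → ℕ)
    (h : ∀ t (r : ℕ), ∃ i, P t i ∧ ∀ k < m t, r ≤ (i + k).natAbs) :
    ∃ pos : ℕ → ℤ, (∀ t, P t (pos t)) ∧
      Function.Injective fun p : Σ t, Fin (m t) => pos p.1 + p.2 := by
  choose place hP hfar using h
  refine ⟨fun t => place t (blockRadius place m t), fun t => hP t _, ?_⟩
  rintro ⟨t, k⟩ ⟨t', k'⟩ heq
  obtain rfl : t = t' := by
    rcases lt_trichotomy t t' with htt' | rfl | htt'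
    · exact absurd heq (place_add_ne_of_lt hfar htt' k.2 k'.2)
    · rfl
    · exact absurd heq.symm (place_add_ne_of_lt hfar htt' k'.2 k.2)
  obtain rfl : k = k' := Fin.ext (by simpa using heq)
  rfl

section Words

variable {α β : Type*}

lemma occursAt_pair {w : ℤ → α} {b : ℤ → β} {u : List (α × β)} {i : ℤ}
    (hw : OccursAt w (u.map Prod.fst) i) (hb : ∀ k : Fin u.length, b (i + k) = (u.get k).2) :
    OccursAt (fun j => (w j, b j)) u i := fun k =>
  Prod.ext (by simpa using hw (k.cast (List.length_map _).symm)) (hb k)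

def BlockBeyond (right : Bool) (n : ℤ) (m : ℕ) (i : ℤ) : Prop :=
  bif right then n ≤ i else i + m ≤ n

lemma exists_occursAt_blockBeyond {w : ℤ → α} {u : List α}
    (hp : InEveryPrefix w u) (hs : InEverySuffix w u) (right : Bool) (n : ℤ) (r : ℕ) :
    ∃ i, (BlockBeyond right n u.length i ∧ OccursAt w u i) ∧
      ∀ k < u.length, r ≤ (i + k).natAbs := by
  cases right
  · obtain ⟨i, hi, hocc⟩ := hp (min n (-r))
    exact ⟨i, ⟨by simp only [BlockBeyond, cond_false]; omega, hocc⟩, fun k hk => by omega⟩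
  · obtain ⟨i, hi, hocc⟩ := hs (max n r)
    exact ⟨i, ⟨by simp only [BlockBeyond, cond_true]; omega, hocc⟩, fun k hk => by omega⟩

/-- A request `(u', n, right)` asks for an occurrence of `u'` beyond `n`, on the right iff `right`;
it is binding only when the projection of `u'` occurs in every prefix and every suffix of `w`. -/
def Serves (w : ℤ → α) (q : List (α × β) × ℤ × Bool) (i : ℤ) : Prop :=
  InEveryPrefix w (q.1.map Prod.fst) → InEverySuffix w (q.1.map Prod.fst) →
    BlockBeyond q.2.2 q.2.1 q.1.length i ∧ OccursAt w (q.1.map Prod.fst) i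

lemma exists_serves (w : ℤ → α) (q : List (α × β) × ℤ × Bool) (r : ℕ) :
    ∃ i, Serves w q i ∧ ∀ k < q.1.length, r ≤ (i + k).natAbs := by
  by_cases hq : InEveryPrefix w (q.1.map Prod.fst) ∧ InEverySuffix w (q.1.map Prod.fst)
  · obtain ⟨i, hi, hfar⟩ := exists_occursAt_blockBeyond hq.1 hq.2 q.2.2 q.2.1 r
    rw [List.length_map] at hi hfar
    exact ⟨i, fun _ _ => hi, hfar⟩
  · exact ⟨r, fun hp hs => absurd ⟨hp, hs⟩ hq, fun k _ => by omega⟩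

end Words

theorem stmt_0_general {σ : Type*} [Fintype σ] (w : ℤ → σ) :
    ∃ b : ℤ → Fin 2,
      ∀ u : List σ, InEveryPrefix w u → InEverySuffix w u →
        ∀ u' : List (σ × Fin 2), u'.map Prod.fst = u →
          InEveryPrefix (fun i => (w i, b i)) u' ∧
          InEverySuffix (fun i => (w i, b i)) u' := by
  obtain ⟨e, he⟩ : ∃ e : ℕ → List (σ × Fin 2) × ℤ × Bool, e.Surjective :=
    exists_surjective_nat _
  obtain ⟨pos, hpos, hinj⟩ := exists_pairwise_disjoint_blocks (P := fun t => Serves w (e t))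
    (fun t => (e t).1.length) fun t => exists_serves w (e t)
  set b : ℤ → Fin 2 := Function.extend (fun p : Σ t, Fin (e t).1.length => pos p.1 + p.2)
    (fun p => ((e p.1).1.get p.2).2) 0
  refine ⟨b, ?_⟩
  rintro _ hp hs u' rfl
  have hserved : ∀ n right, ∃ i, BlockBeyond right n u'.length i ∧
      OccursAt (fun j => (w j, b j)) u' i := by
    intro n right
    obtain ⟨t, ht⟩ := he (u', n, right)
    have hbits : ∀ k : Fin (e t).1.length, b (pos t + k) = ((e t).1.get k).2 :=
      fun k => hinj.extend_apply _ _ ⟨t, k⟩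
    have hserve := hpos t
    rw [ht] at hbits hserve
    obtain ⟨hside, hocc⟩ := hserve hp hs
    exact ⟨pos t, hside, occursAt_pair hocc hbits⟩
  exact ⟨fun n => hserved n false, fun n => hserved n true⟩

/-- For every recurrent `ℤ`-word `w` over a finite alphabet `σ` there is
`b : ℤ → {0,1}` such that the `ℤ`-word `w'(i) = (w i, b i)` over `σ × {0,1}`
has property (*): every finite word `u` over `σ` that occurs in every prefix
and every suffix of `w` is such that every word `u'` over `σ × {0,1}` whose
letterwise projection to `σ` is `u` occurs in every prefix and every suffix
of `w'`. -/
theorem stmt_0 {σ : Type*} [Fintype σ] (w : ℤ → σ) (hw : Recurrent w) :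
    ∃ b : ℤ → Fin 2,
      ∀ u : List σ, InEveryPrefix w u → InEverySuffix w u →
        ∀ u' : List (σ × Fin 2), u'.map Prod.fst = u →
          InEveryPrefix (fun i => (w i, b i)) u' ∧
          InEverySuffix (fun i => (w i, b i)) u' :=
  stmt_0_general w
end

section
/- Let (A, <) be an infinite linear order such that there is no order embedding of ℚ into A (i.e., A is scattered). Then A contains an order-connected subset that is order-isomorphic to ℕ or to ℕ with the reversed order. -/
/-!
Identify two points of a linear order when only finitely many points lie between them. The
classes are intervals, so the quotient is again a linear order, the finite condensation. If
every class were finite, the condensation would be dense and nontrivial, hence would contain a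
copy of `ℚ`, which lifts back along a choice of representatives. So in a scattered order some
class is infinite, and on one side of a point `a` of it the class is an interval ending at `a`
whose bounded subintervals are all finite: a copy of `ℕ` or of `ℕᵒᵈ`.
-/

open Set OrderDual

lemma nonempty_orderIso_nat_of_finite_Iic {β : Type*} [LinearOrder β] [Infinite β]
    (h : ∀ b : β, (Iic b).Finite) : Nonempty (β ≃o ℕ) := by
  obtain ⟨b₀⟩ := ‹Infinite β›.nonempty
  obtain ⟨m, hm, hm_min⟩ := (Iic b₀).exists_min_image id (h b₀) ⟨b₀, le_rfl⟩
  let _ : OrderBot β :=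
    { bot := m, bot_le := fun b => (le_total b b₀).elim (hm_min b) (hm.trans ·) }
  let _ : LocallyFiniteOrder β := .ofFiniteIcc fun a b => (h b).subset Icc_subset_Iic_self
  have : NoMaxOrder β := ⟨fun a => by
    by_contra! ha
    exact infinite_univ ((h a).subset fun b _ => ha b)⟩
  let _ := LinearLocallyFiniteOrder.succOrder β
  let _ := LinearLocallyFiniteOrder.predOrder β
  exact ⟨orderIsoNatOfLinearSuccPredArch⟩

section

variable {α : Type*} [LinearOrder α]

def finiteCondensation (α : Type*) [LinearOrder α] : Setoid α where
  r a b := (uIcc a b).Finite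
  iseqv :=
    ⟨fun a => by simp, fun h => by rwa [uIcc_comm],
      fun hab hbc => (hab.union hbc).subset uIcc_subset_uIcc_union_uIcc⟩

instance finiteCondensation.ordConnected_class (x : Quotient (finiteCondensation α)) :
    OrdConnected (Quotient.mk _ ⁻¹' {x}) := by
  refine ⟨fun b hb c hc d hd => ?_⟩
  induction x using Quotient.inductionOn with | h a
  have hb : (uIcc b a).Finite := Quotient.exact hb
  have hc : (uIcc c a).Finite := Quotient.exact hc
  refine Quotient.sound ((hb.union hc).subset fun t ht => ?_)
  simp only [mem_union, mem_uIcc] at ht hd ⊢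
  grind

lemma finiteCondensation.denselyOrdered (h : ∀ a : α, {b | (uIcc a b).Finite}.Finite) :
    DenselyOrdered (Quotient (finiteCondensation α)) := by
  refine ⟨fun x y hxy => ?_⟩
  induction x using Quotient.inductionOn with | h a
  induction y using Quotient.inductionOn with | h b
  obtain ⟨hab, hab_inf⟩ := Quotient.mk_lt_mk.1 hxy
  have hIcc : (Icc a b).Infinite := by rwa [← uIcc_of_le hab.le]
  obtain ⟨c, ⟨hac, hcb⟩, hc⟩ := (hIcc.sdiff ((h a).union (h b))).nonempty
  simp only [mem_union, mem_ofPred_eq, not_or] at hc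
  refine ⟨⟦c⟧, Quotient.mk_lt_mk.2 ⟨hac.lt_of_ne ?_, hc.1⟩,
    Quotient.mk_lt_mk.2 ⟨hcb.lt_of_ne ?_, ?_⟩⟩
  · rintro rfl; exact hc.1 (by simp)
  · rintro rfl; exact hc.2 (by simp)
  · exact fun h' => hc.2 (by rwa [uIcc_comm])

lemma exists_infinite_finiteCondensation_class [Infinite α] (h : IsEmpty (ℚ ↪o α)) :
    ∃ a : α, {b | (uIcc a b).Finite}.Infinite := by
  by_contra! hfin
  have := finiteCondensation.denselyOrdered hfin
  have : Nontrivial (Quotient (finiteCondensation α)) := by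
    obtain ⟨a⟩ := ‹Infinite α›.nonempty
    obtain ⟨b, hb⟩ := (hfin a).infinite_compl.nonempty
    exact ⟨⟦a⟧, ⟦b⟧, fun hab => hb (Quotient.exact hab)⟩
  classical
  obtain ⟨f⟩ :=
    Order.embedding_from_countable_to_dense (α := ℚ) (β := Quotient (finiteCondensation α))
  refine h.false (OrderEmbedding.ofStrictMono (fun q => (f q).out) fun q r hqr => ?_)
  apply Quotient.lt_of_mk_lt_mk (s := finiteCondensation α)
  simpa only [Quotient.out_eq] using f.strictMono hqr

lemma ordConnected_setOf_le_and_finite_Icc (a : α) :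
    OrdConnected {b | a ≤ b ∧ (Icc a b).Finite} :=
  ⟨fun _ hb _ hc _ hd => ⟨hb.1.trans hd.1, hc.2.subset (Icc_subset_Icc_right hd.2)⟩⟩

lemma exists_ordConnected_orderIso_nat (a : α) (h : {b | a ≤ b ∧ (Icc a b).Finite}.Infinite) :
    ∃ I : Set α, I.OrdConnected ∧ Nonempty (I ≃o ℕ) := by
  refine ⟨_, ordConnected_setOf_le_and_finite_Icc a, ?_⟩
  have := h.to_subtype
  refine nonempty_orderIso_nat_of_finite_Iic fun ⟨b, _, hb⟩ => ?_
  exact (hb.preimage Subtype.val_injective.injOn).subset fun c hc => ⟨c.2.1, hc⟩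

lemma exists_ordConnected_orderIso_natDual (a : α)
    (h : {b | b ≤ a ∧ (Icc b a).Finite}.Infinite) :
    ∃ I : Set α, I.OrdConnected ∧ Nonempty (I ≃o ℕᵒᵈ) := by
  have hdual : {b : αᵒᵈ | toDual a ≤ b ∧ (Icc (toDual a) b).Finite} =
      ofDual ⁻¹' {b | b ≤ a ∧ (Icc b a).Finite} :=
    ext fun b => and_congr Iff.rfl (by rw [← toDual_ofDual b, Icc_toDual]; rfl)
  obtain ⟨I, hI, ⟨e⟩⟩ := exists_ordConnected_orderIso_nat (toDual a) (hdual ▸ h)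
  let e' : ↥(toDual ⁻¹' I) ≃o (↥I)ᵒᵈ :=
    { toFun x := toDual ⟨toDual x.1, x.2⟩
      invFun y := ⟨ofDual (ofDual y).1, (ofDual y).2⟩
      left_inv _ := rfl
      right_inv _ := rfl
      map_rel_iff' := Iff.rfl }
  exact ⟨toDual ⁻¹' I, hI.dual, ⟨e'.trans e.dual⟩⟩

lemma exists_ordConnected_orderIso_nat_or_natDual (a : α) (h : {b | (uIcc a b).Finite}.Infinite) :
    ∃ I : Set α, I.OrdConnected ∧ (Nonempty (I ≃o ℕ) ∨ Nonempty (I ≃o ℕᵒᵈ)) := by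
  have hsub : {b | (uIcc a b).Finite} ⊆
      {b | a ≤ b ∧ (Icc a b).Finite} ∪ {b | b ≤ a ∧ (Icc b a).Finite} := fun b hb =>
    (le_total a b).imp (fun hab => ⟨hab, uIcc_of_le hab ▸ hb⟩)
      (fun hba => ⟨hba, uIcc_of_ge hba ▸ hb⟩)
  rcases infinite_union.1 (h.mono hsub) with hup | hdown
  · obtain ⟨I, hI, e⟩ := exists_ordConnected_orderIso_nat a hup
    exact ⟨I, hI, .inl e⟩
  · obtain ⟨I, hI, e⟩ := exists_ordConnected_orderIso_natDual a hdown
    exact ⟨I, hI, .inr e⟩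

end

/-- An infinite scattered linear order (no order embedding of `ℚ` into it)
contains an order-connected subset order-isomorphic to `ℕ` or to `ℕ` with the
reversed order. -/
theorem stmt_5 {A : Type*} [LinearOrder A] [Infinite A] (hscat : IsEmpty (ℚ ↪o A)) :
    ∃ I : Set A, I.OrdConnected ∧ (Nonempty (I ≃o ℕ) ∨ Nonempty (I ≃o ℕᵒᵈ)) := by
  obtain ⟨a, ha⟩ := exists_infinite_finiteCondensation_class hscat
  exact exists_ordConnected_orderIso_nat_or_natDual a ha
end

section
/- Let M = (A, <, P₁, …, Pₙ) be a labelled linear ordering, let I be an order-connected subset (interval) of A, and let Q ⊆ A. If Q is MSO-definable in M, then Q ∩ I is MSO-definable in the substructure M_I with domain I. -/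
namespace Paper

/-! ## Syntax and semantics of monadic second-order logic over labelled linear orders

A labelled linear ordering `M = (A, <, P₁, …, Pₙ)` is represented by a type `A`,
a binary relation `r : A → A → Prop` (the order) and `P : Fin n → Set A`
(the unary predicates). -/

/-- MSO formulas over the signature `{<, P₀, …, P_{n-1}}`.  First-order
variables and second-order (set) variables are both indexed by `ℕ`. -/
inductive MSO (n : ℕ) : Type
  | lt (i j : ℕ) : MSO n
  | pred (k : Fin n) (i : ℕ) : MSO n
  | mem (i j : ℕ) : MSO n
  | not (φ : MSO n) : MSO n
  | and (φ ψ : MSO n) : MSO n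
  | ex1 (i : ℕ) (φ : MSO n) : MSO n
  | ex2 (j : ℕ) (φ : MSO n) : MSO n

namespace MSO

variable {n : ℕ}

/-- Satisfaction of an MSO formula in the structure `(A, r, P)` under the
first-order assignment `v` and the second-order assignment `V`. -/
def Sat {A : Type} (r : A → A → Prop) (P : Fin n → Set A)
    (v : ℕ → A) (V : ℕ → Set A) : MSO n → Prop
  | lt i j => r (v i) (v j)
  | pred k i => v i ∈ P k
  | mem i j => v i ∈ V j
  | not φ => ¬ Sat r P v V φ
  | and φ ψ => Sat r P v V φ ∧ Sat r P v V ψ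
  | ex1 i φ => ∃ a : A, Sat r P (Function.update v i a) V φ
  | ex2 j φ => ∃ S : Set A, Sat r P v (Function.update V j S) φ

/-- Quantifier depth of an MSO formula. -/
def qd : MSO n → ℕ
  | lt _ _ => 0
  | pred _ _ => 0
  | mem _ _ => 0
  | not φ => qd φ
  | and φ ψ => max (qd φ) (qd ψ)
  | ex1 _ φ => qd φ + 1
  | ex2 _ φ => qd φ + 1

/-- Free first-order variables of an MSO formula. -/
def fv1 : MSO n → Finset ℕ
  | lt i j => {i, j}
  | pred _ i => {i}
  | mem i _ => {i}
  | not φ => fv1 φ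
  | and φ ψ => fv1 φ ∪ fv1 ψ
  | ex1 i φ => fv1 φ \ {i}
  | ex2 _ φ => fv1 φ

/-- Free second-order variables of an MSO formula. -/
def fv2 : MSO n → Finset ℕ
  | lt _ _ => ∅
  | pred _ _ => ∅
  | mem _ j => {j}
  | not φ => fv2 φ
  | and φ ψ => fv2 φ ∪ fv2 ψ
  | ex1 _ φ => fv2 φ
  | ex2 j φ => fv2 φ \ {j}

/-- A sentence is a formula with no free variables. -/
def IsSentence (φ : MSO n) : Prop := fv1 φ = ∅ ∧ fv2 φ = ∅

/-- A sentence `φ` is true in the structure `(A, r, P)`. -/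
def TrueIn {A : Type} (r : A → A → Prop) (P : Fin n → Set A) (φ : MSO n) : Prop :=
  ∀ (v : ℕ → A) (V : ℕ → Set A), Sat r P v V φ

/-- `Q ⊆ A` is MSO-definable in `(A, r, P)`: there is a formula `φ(x)` whose only
free variable is the first-order variable `0` defining `Q`. -/
def Definable {A : Type} (r : A → A → Prop) (P : Fin n → Set A) (Q : Set A) : Prop :=
  ∃ φ : MSO n, fv1 φ ⊆ {0} ∧ fv2 φ = ∅ ∧
    ∀ a : A, a ∈ Q ↔ ∀ (v : ℕ → A) (V : ℕ → Set A), Sat r P (Function.update v 0 a) V φ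

/-- A Gödel numbering of MSO formulas. -/
def encode : MSO n → ℕ
  | lt i j => Nat.pair 0 (Nat.pair i j)
  | pred k i => Nat.pair 1 (Nat.pair k i)
  | mem i j => Nat.pair 2 (Nat.pair i j)
  | not φ => Nat.pair 3 (encode φ)
  | and φ ψ => Nat.pair 4 (Nat.pair (encode φ) (encode ψ))
  | ex1 i φ => Nat.pair 5 (Nat.pair i (encode φ))
  | ex2 j φ => Nat.pair 6 (Nat.pair j (encode φ))

/-- The MSO theory of the structure `(A, r, P)`, as a set of Gödel codes of the true
sentences. -/
def TheoryCodes {A : Type} (r : A → A → Prop) (P : Fin n → Set A) : Set ℕ :=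
  {c | ∃ φ : MSO n, IsSentence φ ∧ encode φ = c ∧ TrueIn r P φ}

/-- Two structures have the same `k`-type: they satisfy the same MSO sentences of
quantifier depth `≤ k`. -/
def EquivType (k : ℕ) {A B : Type} (r : A → A → Prop) (P : Fin n → Set A)
    (s : B → B → Prop) (Q : Fin n → Set B) : Prop :=
  ∀ φ : MSO n, IsSentence φ → qd φ ≤ k → (TrueIn r P φ ↔ TrueIn s Q φ)

/-- The `k`-type of a structure, as the set of Gödel codes of the true sentences
of quantifier depth `≤ k`. -/
def TypeSet (k : ℕ) {A : Type} (r : A → A → Prop) (P : Fin n → Set A) : Set ℕ :=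
  {c | ∃ φ : MSO n, IsSentence φ ∧ qd φ ≤ k ∧ encode φ = c ∧ TrueIn r P φ}

end MSO

/-- The order relation of the substructure with domain `S`. -/
def subRel {A : Type} (r : A → A → Prop) (S : Set A) : S → S → Prop :=
  fun x y => r x y

/-- The predicates of the substructure with domain `S`. -/
def subPred {A : Type} {n : ℕ} (P : Fin n → Set A) (S : Set A) : Fin n → Set S :=
  fun k => {x : S | (x : A) ∈ P k}

/-! ## Relative computability -/

/-- Partial recursiveness relative to an oracle `O` (Kleene-style, following
the definition of `Nat.Partrec`, with an extra base case for the oracle). -/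
inductive RecursiveIn (O : ℕ →. ℕ) : (ℕ →. ℕ) → Prop
  | zero : RecursiveIn O (pure 0)
  | succ : RecursiveIn O ↑Nat.succ
  | left : RecursiveIn O ↑fun n : ℕ => n.unpair.1
  | right : RecursiveIn O ↑fun n : ℕ => n.unpair.2
  | oracle : RecursiveIn O O
  | pair {f g} : RecursiveIn O f → RecursiveIn O g →
      RecursiveIn O fun n => Nat.pair <$> f n <*> g n
  | comp {f g} : RecursiveIn O f → RecursiveIn O g →
      RecursiveIn O fun n => g n >>= f
  | prec {f g} : RecursiveIn O f → RecursiveIn O g →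
      RecursiveIn O (Nat.unpaired fun a m =>
        m.rec (f a) fun y IH => do let i ← IH; g (Nat.pair a (Nat.pair y i)))
  | rfind {f} : RecursiveIn O f →
      RecursiveIn O fun a => Nat.rfind fun m => (fun x => x = 0) <$> f (Nat.pair a m)

/-- The characteristic (partial) function of a set of naturals. -/
noncomputable def chi (S : Set ℕ) : ℕ →. ℕ :=
  fun m => Part.some (S.indicator (fun _ => 1) m)

/-- `S` is recursive in (Turing reducible to) `T`. -/
def TuringRed (S T : Set ℕ) : Prop := RecursiveIn (chi T) (chi S)

/-- The (recursive) join of a finite family of sets of naturals. -/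
def finJoin {m : ℕ} (P : Fin m → Set ℕ) : Set ℕ :=
  {c | ∃ i : Fin m, ∃ x : ℕ, c = Nat.pair i x ∧ x ∈ P i}

/-- The (recursive) join of two sets of naturals. -/
def setJoin (S T : Set ℕ) : Set ℕ :=
  {c | (∃ a, c = 2 * a ∧ a ∈ S) ∨ (∃ a, c = 2 * a + 1 ∧ a ∈ T)}

/-- A set of naturals is decidable (computable). -/
def DecidableSet (S : Set ℕ) : Prop := ComputablePred (· ∈ S)

/-! ## Homogeneous sets for labelled orderings of the naturals -/

/-- `H = {h 0 < h 1 < ⋯}` is `k`-homogeneous for `(ℕ, <, P)`: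
all substructures `M_{[h i, h j)}`, `i < j`, have the same `k`-type. -/
def KHomogeneous {n : ℕ} (P : Fin n → Set ℕ) (h : ℕ → ℕ) (k : ℕ) : Prop :=
  ∀ i j i' j' : ℕ, i < j → i' < j' →
    MSO.EquivType k
      (subRel (· < ·) (Set.Ico (h i) (h j))) (subPred P (Set.Ico (h i) (h j)))
      (subRel (· < ·) (Set.Ico (h i') (h j'))) (subPred P (Set.Ico (h i') (h j')))

/-- `H = {h 0 < h 1 < ⋯}` is uniformly homogeneous for `(ℕ, <, P)`:
for each `k`, the set `{h k < h (k+1) < ⋯}` is `k`-homogeneous. -/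
def UniformlyHomogeneous {n : ℕ} (P : Fin n → Set ℕ) (h : ℕ → ℕ) : Prop :=
  StrictMono h ∧
  ∀ k : ℕ, KHomogeneous P (fun i => h (k + i)) k

/-! ## ℤ-words -/

/-- The finite word `u` occurs at position `i` in the `ℤ`-word `w`. -/
def OccursAt {σ : Type} (w : ℤ → σ) (u : List σ) (i : ℤ) : Prop :=
  ∀ k : Fin u.length, w (i + (k : ℕ)) = u.get k

/-- The finite word `u` occurs in the `ℤ`-word `w`. -/
def OccursIn {σ : Type} (w : ℤ → σ) (u : List σ) : Prop :=
  ∃ i : ℤ, OccursAt w u i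

/-- `u` occurs in every prefix of `w`. -/
def InEveryPrefix {σ : Type} (w : ℤ → σ) (u : List σ) : Prop :=
  ∀ n : ℤ, ∃ i : ℤ, i + u.length ≤ n ∧ OccursAt w u i

/-- `u` occurs in every suffix of `w`. -/
def InEverySuffix {σ : Type} (w : ℤ → σ) (u : List σ) : Prop :=
  ∀ n : ℤ, ∃ i : ℤ, n ≤ i ∧ OccursAt w u i

/-- A `ℤ`-word `w` is recurrent: for every regular language `X`, either no element
of `X` occurs in `w`, or every prefix and every suffix of `w` contains an
occurrence of some element of `X`. -/
def Recurrent {σ : Type} (w : ℤ → σ) : Prop :=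
  ∀ X : Language σ, X.IsRegular →
    (∀ u ∈ X, ¬ OccursIn w u) ∨
    (∀ n : ℤ, (∃ u ∈ X, ∃ i : ℤ, i + u.length ≤ n ∧ OccursAt w u i) ∧
              (∃ u ∈ X, ∃ i : ℤ, n ≤ i ∧ OccursAt w u i))

/-- The `ℤ`-word `w(M)` over the alphabet `{0,1}ⁿ` associated with the labelled
linear ordering `M = (ℤ, <, P₁, …, Pₙ)`. -/
def wordOf {n : ℕ} (P : Fin n → Set ℤ) : ℤ → (Fin n → Prop) :=
  fun i k => i ∈ P k

end Paper

/-! The truth of `φ(b)` in `M`, for `b ∈ I`, depends only on the `k`-type of `b` in `M_I`,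
where `k` is the quantifier depth of `φ`: `M` is `M_I` with fixed parts to its left and right,
and an induction on `φ` replaces points and sets inside `I` by ones of the same type, convexity
of `I` settling comparisons across its boundary. There are finitely many `k`-types, each
defined in `M_I` by its Hintikka formula, so `Q ∩ I`, a union of type classes, is defined by a
finite disjunction of Hintikka formulas. -/

theorem Function.rel_update {α β γ : Type*} [DecidableEq α] {R : β → γ → Prop} {f : α → β}
    {g : α → γ} (h : ∀ x, R (f x) (g x)) (i : α) {b : β} {c : γ} (hbc : R b c) (x : α) :
    R (Function.update f i b x) (Function.update g i c x) := by
  rcases eq_or_ne x i with rfl | hx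
  · simpa using hbc
  · simpa [hx] using h x

namespace Set.OrdConnected

variable {A : Type} [LinearOrder A] {I : Set A} {x y c : A}

theorem lt_iff_lt_of_notMem_right (hI : I.OrdConnected) (hx : x ∈ I) (hy : y ∈ I)
    (hc : c ∉ I) : x < c ↔ y < c :=
  have key : ∀ {x y}, x ∈ I → y ∈ I → x < c → y < c :=
    fun hx hy hxc => lt_of_not_ge fun hcy => hc (hI.out hx hy ⟨hxc.le, hcy⟩)
  ⟨key hx hy, key hy hx⟩

theorem lt_iff_lt_of_notMem_left (hI : I.OrdConnected) (hx : x ∈ I) (hy : y ∈ I)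
    (hc : c ∉ I) : c < x ↔ c < y :=
  have key : ∀ {x y}, x ∈ I → y ∈ I → c < x → c < y :=
    fun hx hy hcx => lt_of_not_ge fun hyc => hc (hI.out hy hx ⟨hyc, hcx.le⟩)
  ⟨key hx hy, key hy hx⟩

end Set.OrdConnected

namespace Paper.MSO

open Function

variable {n : ℕ}

/-- Closed and false in every structure, unlike `.lt 0 0`, which has a free variable and is
false only for irreflexive `r`. -/
def falsum : MSO n := .ex1 0 (.and (.lt 0 0) (.not (.lt 0 0)))

def verum : MSO n := .not falsum

def bigAnd : List (MSO n) → MSO n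
  | [] => verum
  | φ :: l => .and φ (bigAnd l)

noncomputable def conj {ι : Type} [Finite ι] (f : ι → MSO n) : MSO n :=
  letI := Fintype.ofFinite ι
  bigAnd (Finset.univ.toList.map f)

noncomputable def disj {ι : Type} [Finite ι] (f : ι → MSO n) : MSO n :=
  .not (conj fun i => .not (f i))

open scoped Classical in
noncomputable def lit (p : Prop) (φ : MSO n) : MSO n := if p then φ else .not φ

section Semantics

variable {A : Type} {r : A → A → Prop} {P : Fin n → Set A} {v : ℕ → A} {V : ℕ → Set A}

theorem sat_verum : Sat r P v V verum := by
  simp [verum, falsum, Sat]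

theorem sat_bigAnd {l : List (MSO n)} : Sat r P v V (bigAnd l) ↔ ∀ φ ∈ l, Sat r P v V φ := by
  induction l with
  | nil => simp [bigAnd, sat_verum]
  | cons φ l ih => simp [bigAnd, Sat, ih]

theorem sat_conj {ι : Type} [Finite ι] {f : ι → MSO n} :
    Sat r P v V (conj f) ↔ ∀ i, Sat r P v V (f i) := by
  simp [conj, sat_bigAnd]

theorem sat_disj {ι : Type} [Finite ι] {f : ι → MSO n} :
    Sat r P v V (disj f) ↔ ∃ i, Sat r P v V (f i) := by
  simp [disj, Sat, sat_conj]

theorem sat_lit {p : Prop} {φ : MSO n} : Sat r P v V (lit p φ) ↔ (Sat r P v V φ ↔ p) := by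
  by_cases hp : p <;> simp [lit, hp, Sat]

end Semantics

section FreeVariables

variable {T : Finset ℕ}

theorem fv1_bigAnd_subset {l : List (MSO n)} (h : ∀ φ ∈ l, fv1 φ ⊆ T) : fv1 (bigAnd l) ⊆ T := by
  induction l with
  | nil => simp [bigAnd, verum, falsum, fv1]
  | cons φ l ih => simp_all [bigAnd, fv1, Finset.union_subset_iff]

theorem fv2_bigAnd_subset {l : List (MSO n)} (h : ∀ φ ∈ l, fv2 φ ⊆ T) : fv2 (bigAnd l) ⊆ T := by
  induction l with
  | nil => simp [bigAnd, verum, falsum, fv2]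
  | cons φ l ih => simp_all [bigAnd, fv2, Finset.union_subset_iff]

theorem fv1_conj_subset {ι : Type} [Finite ι] {f : ι → MSO n} (h : ∀ i, fv1 (f i) ⊆ T) :
    fv1 (conj f) ⊆ T :=
  fv1_bigAnd_subset (by simpa using h)

theorem fv2_conj_subset {ι : Type} [Finite ι] {f : ι → MSO n} (h : ∀ i, fv2 (f i) ⊆ T) :
    fv2 (conj f) ⊆ T :=
  fv2_bigAnd_subset (by simpa using h)

theorem fv1_disj_subset {ι : Type} [Finite ι] {f : ι → MSO n} (h : ∀ i, fv1 (f i) ⊆ T) :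
    fv1 (disj f) ⊆ T :=
  fv1_conj_subset (f := fun i => .not (f i)) h

theorem fv2_disj_subset {ι : Type} [Finite ι] {f : ι → MSO n} (h : ∀ i, fv2 (f i) ⊆ T) :
    fv2 (disj f) ⊆ T :=
  fv2_conj_subset (f := fun i => .not (f i)) h

theorem fv1_lit (p : Prop) (φ : MSO n) : fv1 (lit p φ) = fv1 φ := by
  by_cases hp : p <;> simp [lit, hp, fv1]

theorem fv2_lit (p : Prop) (φ : MSO n) : fv2 (lit p φ) = fv2 φ := by
  by_cases hp : p <;> simp [lit, hp, fv2]

end FreeVariables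

theorem sat_congr {A : Type} {r : A → A → Prop} {P : Fin n → Set A} (φ : MSO n) :
    ∀ {v₁ v₂ : ℕ → A} {V₁ V₂ : ℕ → Set A},
      (∀ i ∈ fv1 φ, v₁ i = v₂ i) → (∀ j ∈ fv2 φ, V₁ j = V₂ j) →
      (Sat r P v₁ V₁ φ ↔ Sat r P v₂ V₂ φ) := by
  induction φ with
  | lt i j => intro _ _ _ _ hv _; simp [Sat, hv i (by simp [fv1]), hv j (by simp [fv1])]
  | pred m i => intro _ _ _ _ hv _; simp [Sat, hv i (by simp [fv1])]
  | mem i j => intro _ _ _ _ hv hV; simp [Sat, hv i (by simp [fv1]), hV j (by simp [fv2])]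
  | not φ ih => intro _ _ _ _ hv hV; exact not_congr (ih hv hV)
  | and φ ψ ihφ ihψ =>
    intro _ _ _ _ hv hV
    simp only [fv1, fv2, Finset.mem_union] at hv hV
    exact and_congr (ihφ (fun i hi => hv i (.inl hi)) fun j hj => hV j (.inl hj))
      (ihψ (fun i hi => hv i (.inr hi)) fun j hj => hV j (.inr hj))
  | ex1 i φ ih =>
    intro _ _ _ _ hv hV
    refine exists_congr fun a => ih (fun i' hi' => ?_) hV
    rcases eq_or_ne i' i with rfl | hne
    · simp
    · simpa [hne] using hv i' (by simp [fv1, hi', hne])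
  | ex2 j φ ih =>
    intro _ _ _ _ hv hV
    refine exists_congr fun S => ih hv fun j' hj' => ?_
    rcases eq_or_ne j' j with rfl | hne
    · simp
    · simpa [hne] using hV j' (by simp [fv2, hj', hne])

theorem forall_sat_update_iff {A : Type} {r : A → A → Prop} {P : Fin n → Set A} {φ : MSO n}
    (h1 : fv1 φ ⊆ {0}) (h2 : fv2 φ = ∅) (a : A) :
    (∀ (v : ℕ → A) (V : ℕ → Set A), Sat r P (update v 0 a) V φ) ↔
      Sat r P (fun _ => a) (fun _ => ∅) φ := by
  have key : ∀ v V, Sat r P (update v 0 a) V φ ↔ Sat r P (fun _ => a) (fun _ => ∅) φ :=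
    fun v V => sat_congr φ (fun i hi => by simp [Finset.mem_singleton.mp (h1 hi)])
      (by simp [h2])
  exact ⟨fun h => (key _ _).1 (h (fun _ => a) fun _ => ∅), fun h v V => (key v V).2 h⟩

abbrev Atom (n e s : ℕ) : Type := (Fin e × Fin e) ⊕ (Fin n × Fin e) ⊕ (Fin e × Fin s)

def atom {e s : ℕ} : Atom n e s → MSO n
  | .inl (i, j) => .lt i j
  | .inr (.inl (m, i)) => .pred m i
  | .inr (.inr (i, j)) => .mem i j

theorem fv1_atom_subset {e s : ℕ} (α : Atom n e s) : fv1 (atom α) ⊆ Finset.range e := by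
  rcases α with ⟨i, j⟩ | ⟨m, i⟩ | ⟨i, j⟩ <;> simp [atom, fv1, Finset.insert_subset_iff]

theorem fv2_atom_subset {e s : ℕ} (α : Atom n e s) : fv2 (atom α) ⊆ Finset.range s := by
  rcases α with ⟨i, j⟩ | ⟨m, i⟩ | ⟨i, j⟩ <;> simp [atom, fv2]

/-- The `k`-types of `e` points and `s` sets: at level `0` the set of true atoms, at level
`k + 1` the `k`-type together with the sets of `k`-types of all one-point and one-set
extensions. -/
abbrev Typ (n : ℕ) : ℕ → ℕ → ℕ → Type
  | 0, e, s => Set (Atom n e s)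
  | k + 1, e, s => Typ n k e s × Set (Typ n k (e + 1) s) × Set (Typ n k e (s + 1))

instance Typ.finite : ∀ k e s, Finite (Typ n k e s)
  | 0, e, s => inferInstanceAs (Finite (Set (Atom n e s)))
  | k + 1, e, s =>
    have := Typ.finite k e s
    have := Typ.finite k (e + 1) s
    have := Typ.finite k e (s + 1)
    inferInstanceAs (Finite (_ × Set _ × Set _))

def typeOf {A : Type} (r : A → A → Prop) (P : Fin n → Set A) :
    (k e s : ℕ) → (ℕ → A) → (ℕ → Set A) → Typ n k e s
  | 0, _, _, v, V => {α | Sat r P v V (atom α)}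
  | k + 1, e, s, v, V =>
    (typeOf r P k e s v V, Set.range fun a => typeOf r P k (e + 1) s (update v e a) V,
      Set.range fun S => typeOf r P k e (s + 1) v (update V s S))

noncomputable def hintikka : (k e s : ℕ) → Typ n k e s → MSO n
  | 0, _, _, τ => conj fun α => lit (α ∈ τ) (atom α)
  | k + 1, e, s, τ =>
    .and (hintikka k e s τ.1) (.and
      (conj fun σ => lit (σ ∈ τ.2.1) (.ex1 e (hintikka k (e + 1) s σ)))
      (conj fun σ => lit (σ ∈ τ.2.2) (.ex2 s (hintikka k e (s + 1) σ))))

theorem sat_hintikka {A : Type} (r : A → A → Prop) (P : Fin n → Set A) (k : ℕ) :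
    ∀ {e s : ℕ} (τ : Typ n k e s) (v : ℕ → A) (V : ℕ → Set A),
      Sat r P v V (hintikka k e s τ) ↔ typeOf r P k e s v V = τ := by
  induction k with
  | zero =>
    intro e s τ v V
    simp only [hintikka, sat_conj, sat_lit, typeOf, Set.ext_iff, Set.mem_ofPred_eq]
  | succ k ih =>
    intro e s τ v V
    simp only [hintikka, typeOf, Sat, sat_conj, sat_lit, ih, Prod.ext_iff, Set.ext_iff,
      Set.mem_range]

theorem fv1_hintikka_subset : ∀ (k : ℕ) {e s : ℕ} (τ : Typ n k e s),
    fv1 (hintikka k e s τ) ⊆ Finset.range e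
  | 0, _, _, _ => fv1_conj_subset fun α => by rw [fv1_lit]; exact fv1_atom_subset α
  | k + 1, e, _, τ => by
    refine Finset.union_subset (fv1_hintikka_subset k τ.1) (Finset.union_subset
      (fv1_conj_subset fun σ => ?_) (fv1_conj_subset fun σ => ?_))
    · intro i hi
      rw [fv1_lit, fv1, Finset.mem_sdiff, Finset.mem_singleton] at hi
      have := fv1_hintikka_subset k σ hi.1
      simp only [Finset.mem_range] at this ⊢
      omega
    · rw [fv1_lit]; exact fv1_hintikka_subset k σ

theorem fv2_hintikka_subset : ∀ (k : ℕ) {e s : ℕ} (τ : Typ n k e s),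
    fv2 (hintikka k e s τ) ⊆ Finset.range s
  | 0, _, _, _ => fv2_conj_subset fun α => by rw [fv2_lit]; exact fv2_atom_subset α
  | k + 1, _, s, τ => by
    refine Finset.union_subset (fv2_hintikka_subset k τ.1) (Finset.union_subset
      (fv2_conj_subset fun σ => ?_) (fv2_conj_subset fun σ => ?_))
    · rw [fv2_lit]; exact fv2_hintikka_subset k σ
    · intro j hj
      rw [fv2_lit, fv2, Finset.mem_sdiff, Finset.mem_singleton] at hj
      have := fv2_hintikka_subset k σ hj.1
      simp only [Finset.mem_range] at this ⊢
      omega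

section Types

variable {A : Type} {r : A → A → Prop} {P : Fin n → Set A} {k e s : ℕ}
  {v₁ v₂ : ℕ → A} {V₁ V₂ : ℕ → Set A}

theorem typeOf_congr (hv : ∀ i < e, v₁ i = v₂ i) (hV : ∀ j < s, V₁ j = V₂ j) :
    typeOf r P k e s v₁ V₁ = typeOf r P k e s v₂ V₂ := by
  rw [← sat_hintikka]
  refine (sat_congr _ (fun i hi => ?_) fun j hj => ?_).2 ((sat_hintikka r P k _ v₂ V₂).2 rfl)
  · exact hv i (Finset.mem_range.1 (fv1_hintikka_subset k _ hi))
  · exact hV j (Finset.mem_range.1 (fv2_hintikka_subset k _ hj))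

theorem typeOf_zero_eq_of_eq (h : typeOf r P k e s v₁ V₁ = typeOf r P k e s v₂ V₂) :
    typeOf r P 0 e s v₁ V₁ = typeOf r P 0 e s v₂ V₂ := by
  induction k generalizing e s v₁ v₂ V₁ V₂ with
  | zero => exact h
  | succ k ih => exact ih (congrArg Prod.fst h)

theorem exists_typeOf_update_eq (h : typeOf r P (k + 1) e s v₁ V₁ = typeOf r P (k + 1) e s v₂ V₂)
    (a₁ : A) : ∃ a₂, typeOf r P k (e + 1) s (update v₂ e a₂) V₂ =
      typeOf r P k (e + 1) s (update v₁ e a₁) V₁ := by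
  have hrange : Set.range (fun a => typeOf r P k (e + 1) s (update v₁ e a) V₁) =
      Set.range (fun a => typeOf r P k (e + 1) s (update v₂ e a) V₂) := congrArg (·.2.1) h
  rw [← Set.mem_range, ← hrange]
  exact Set.mem_range_self a₁

theorem exists_typeOf_update_set_eq
    (h : typeOf r P (k + 1) e s v₁ V₁ = typeOf r P (k + 1) e s v₂ V₂) (S₁ : Set A) :
    ∃ S₂, typeOf r P k e (s + 1) v₂ (update V₂ s S₂) =
      typeOf r P k e (s + 1) v₁ (update V₁ s S₁) := by
  have hrange : Set.range (fun S => typeOf r P k e (s + 1) v₁ (update V₁ s S)) =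
      Set.range (fun S => typeOf r P k e (s + 1) v₂ (update V₂ s S)) := congrArg (·.2.2) h
  rw [← Set.mem_range, ← hrange]
  exact Set.mem_range_self S₁

end Types

/-- A set closed under equality of `k`-types is the union of finitely many type classes,
each defined by its Hintikka formula. -/
theorem definable_of_typeOf_eq {B : Type} {r : B → B → Prop} {P : Fin n → Set B} {R : Set B}
    (k : ℕ) (hR : ∀ b₀ b, b₀ ∈ R → typeOf r P k 1 0 (fun _ => b₀) (fun _ => ∅) =
      typeOf r P k 1 0 (fun _ => b) (fun _ => ∅) → b ∈ R) :
    Definable r P R := by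
  set tp := fun b : B => typeOf r P k 1 0 (fun _ => b) (fun _ => ∅)
  set ψ : MSO n := disj fun τ : tp '' R => hintikka k 1 0 τ
  have hψ1 : fv1 ψ ⊆ Finset.range 1 := fv1_disj_subset fun τ => fv1_hintikka_subset k τ.1
  have hψ2 : fv2 ψ ⊆ Finset.range 0 := fv2_disj_subset fun τ => fv2_hintikka_subset k τ.1
  refine ⟨ψ, by simpa using hψ1, by simpa using hψ2, fun b => ?_⟩
  have htp : ∀ v V, typeOf r P k 1 0 (update v 0 b) V = tp b :=
    fun v V => typeOf_congr (by simp) (by simp)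
  simp only [ψ, sat_disj, sat_hintikka, htp]
  constructor
  · intro hb _ _
    exact ⟨⟨tp b, b, hb, rfl⟩, rfl⟩
  · intro h
    obtain ⟨⟨_, b₀, hb₀, rfl⟩, h⟩ := h (fun _ => b) fun _ => ∅
    exact hR b₀ b hb₀ h.symm

variable {A : Type} {I : Set A} {e s : ℕ} {w₁ w₂ : ℕ → I} {W₁ W₂ : ℕ → Set I}

def ElemMatch (I : Set A) (e : ℕ) (w₁ w₂ : ℕ → I) (a₁ a₂ : A) : Prop :=
  (∃ p < e, a₁ = w₁ p ∧ a₂ = w₂ p) ∨ (a₁ = a₂ ∧ a₁ ∉ I)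

def SetMatch (I : Set A) (s : ℕ) (W₁ W₂ : ℕ → Set I) (S₁ S₂ : Set A) : Prop :=
  (∃ q < s, (↑) ⁻¹' S₁ = W₁ q ∧ (↑) ⁻¹' S₂ = W₂ q ∧ S₁ \ I = S₂ \ I) ∨
    (S₁ = S₂ ∧ Disjoint S₁ I)

variable {a₁ a₂ : A} {S₁ S₂ : Set A}

theorem ElemMatch.symm (h : ElemMatch I e w₁ w₂ a₁ a₂) : ElemMatch I e w₂ w₁ a₂ a₁ := by
  rcases h with ⟨p, hp, h₁, h₂⟩ | ⟨rfl, h⟩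
  exacts [.inl ⟨p, hp, h₂, h₁⟩, .inr ⟨rfl, h⟩]

theorem SetMatch.symm (h : SetMatch I s W₁ W₂ S₁ S₂) : SetMatch I s W₂ W₁ S₂ S₁ := by
  rcases h with ⟨q, hq, h₁, h₂, h⟩ | ⟨rfl, h⟩
  exacts [.inl ⟨q, hq, h₂, h₁, h.symm⟩, .inr ⟨rfl, h⟩]

theorem ElemMatch.update (h : ElemMatch I e w₁ w₂ a₁ a₂) (x₁ x₂ : I) :
    ElemMatch I (e + 1) (update w₁ e x₁) (update w₂ e x₂) a₁ a₂ := by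
  rcases h with ⟨p, hp, h₁, h₂⟩ | h
  · exact .inl ⟨p, by omega, by simpa [hp.ne] using h₁, by simpa [hp.ne] using h₂⟩
  · exact .inr h

theorem SetMatch.update (h : SetMatch I s W₁ W₂ S₁ S₂) (T₁ T₂ : Set I) :
    SetMatch I (s + 1) (update W₁ s T₁) (update W₂ s T₂) S₁ S₂ := by
  rcases h with ⟨q, hq, h₁, h₂, h⟩ | h
  · exact .inl ⟨q, by omega, by simpa [hq.ne] using h₁, by simpa [hq.ne] using h₂, h⟩
  · exact .inr h

theorem setMatch_update_image_union_diff (S₁ : Set A) (T₂ : Set I) :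
    SetMatch I (s + 1) (update W₁ s ((↑) ⁻¹' S₁)) (update W₂ s T₂) S₁ ((↑) '' T₂ ∪ S₁ \ I) := by
  refine .inl ⟨s, s.lt_succ_self, by simp, ?_, ?_⟩
  · ext x
    simp
  · ext x
    constructor
    · rintro ⟨hx, hxI⟩
      exact ⟨.inr ⟨hx, hxI⟩, hxI⟩
    · rintro ⟨⟨y, -, rfl⟩ | hx, hxI⟩
      exacts [absurd y.2 hxI, hx]

variable [LinearOrder A] {P : Fin n → Set A} {b₁ b₂ : A}

local notation "typeIn" => typeOf (subRel (· < ·) I) (subPred P I)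

theorem ElemMatch.lt (hI : I.OrdConnected) (ht : typeIn 0 e s w₁ W₁ = typeIn 0 e s w₂ W₂)
    (ha : ElemMatch I e w₁ w₂ a₁ a₂) (hb : ElemMatch I e w₁ w₂ b₁ b₂) (h : a₁ < b₁) :
    a₂ < b₂ := by
  rcases ha with ⟨p, hp, rfl, rfl⟩ | ⟨rfl, ha⟩ <;> rcases hb with ⟨q, hq, rfl, rfl⟩ | ⟨rfl, hb⟩
  · exact (Set.ext_iff.1 ht (.inl (⟨p, hp⟩, ⟨q, hq⟩))).1 h
  · exact (hI.lt_iff_lt_of_notMem_right (w₁ p).2 (w₂ p).2 hb).1 h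
  · exact (hI.lt_iff_lt_of_notMem_left (w₁ q).2 (w₂ q).2 ha).1 h
  · exact h

theorem ElemMatch.mem_pred (ht : typeIn 0 e s w₁ W₁ = typeIn 0 e s w₂ W₂)
    (ha : ElemMatch I e w₁ w₂ a₁ a₂) (m : Fin n) (h : a₁ ∈ P m) : a₂ ∈ P m := by
  rcases ha with ⟨p, hp, rfl, rfl⟩ | ⟨rfl, -⟩
  · exact (Set.ext_iff.1 ht (.inr (.inl (m, ⟨p, hp⟩)))).1 h
  · exact h

theorem ElemMatch.mem (ht : typeIn 0 e s w₁ W₁ = typeIn 0 e s w₂ W₂)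
    (ha : ElemMatch I e w₁ w₂ a₁ a₂) (hS : SetMatch I s W₁ W₂ S₁ S₂) (h : a₁ ∈ S₁) :
    a₂ ∈ S₂ := by
  rcases ha with ⟨p, hp, rfl, rfl⟩ | ⟨rfl, ha⟩ <;> rcases hS with ⟨q, hq, h₁, h₂, hS⟩ | ⟨rfl, hS⟩
  · change w₁ p ∈ (↑) ⁻¹' S₁ at h
    change w₂ p ∈ (↑) ⁻¹' S₂
    rw [h₁] at h
    rw [h₂]
    exact (Set.ext_iff.1 ht (.inr (.inr (⟨p, hp⟩, ⟨q, hq⟩)))).1 h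
  · exact absurd (w₁ p).2 (hS.notMem_of_mem_left h)
  · exact (hS ▸ ⟨h, ha⟩ : a₁ ∈ S₂ \ I).1
  · exact h

/-- The composition lemma for `M = M_{<I} + M_I + M_{>I}`. -/
theorem sat_of_typeOf_eq (hI : I.OrdConnected) (φ : MSO n) :
    ∀ {k e s : ℕ} {w₁ w₂ : ℕ → I} {W₁ W₂ : ℕ → Set I} {v₁ v₂ : ℕ → A} {V₁ V₂ : ℕ → Set A},
      qd φ ≤ k → typeIn k e s w₁ W₁ = typeIn k e s w₂ W₂ →
      (∀ i, ElemMatch I e w₁ w₂ (v₁ i) (v₂ i)) → (∀ j, SetMatch I s W₁ W₂ (V₁ j) (V₂ j)) →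
      Sat (· < ·) P v₁ V₁ φ → Sat (· < ·) P v₂ V₂ φ := by
  induction φ with
  | lt i j => exact fun _ ht hv _ h => (hv i).lt hI (typeOf_zero_eq_of_eq ht) (hv j) h
  | pred m i => exact fun _ ht hv _ h => (hv i).mem_pred (typeOf_zero_eq_of_eq ht) m h
  | mem i j => exact fun _ ht hv hV h => (hv i).mem (typeOf_zero_eq_of_eq ht) (hV j) h
  | not φ ih =>
    exact fun hk ht hv hV h h₂ =>
      h (ih hk ht.symm (fun i => (hv i).symm) (fun j => (hV j).symm) h₂)
  | and φ ψ ihφ ihψ =>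
    exact fun hk ht hv hV h =>
      ⟨ihφ (le_of_max_le_left hk) ht hv hV h.1, ihψ (le_of_max_le_right hk) ht hv hV h.2⟩
  | ex1 i φ ih =>
    intro k e s w₁ w₂ W₁ W₂ v₁ v₂ V₁ V₂ hk ht hv hV ⟨a, ha⟩
    obtain _ | k := k
    · exact absurd hk (by simp [qd])
    replace hk : qd φ ≤ k := Nat.le_of_succ_le_succ hk
    by_cases haI : a ∈ I
    · obtain ⟨x₂, hx₂⟩ := exists_typeOf_update_eq ht ⟨a, haI⟩
      refine ⟨x₂, ih hk hx₂.symm (rel_update (fun i => (hv i).update _ _) i ?_)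
        hV ha⟩
      exact .inl ⟨e, e.lt_succ_self, by simp, by simp⟩
    · exact ⟨a, ih hk (congrArg Prod.fst ht) (rel_update hv i (.inr ⟨rfl, haI⟩)) hV ha⟩
  | ex2 j φ ih =>
    intro k e s w₁ w₂ W₁ W₂ v₁ v₂ V₁ V₂ hk ht hv hV ⟨S, hS⟩
    obtain _ | k := k
    · exact absurd hk (by simp [qd])
    obtain ⟨T₂, hT₂⟩ := exists_typeOf_update_set_eq ht ((↑) ⁻¹' S)
    exact ⟨_, ih (Nat.le_of_succ_le_succ hk) hT₂.symm hv
      (rel_update (fun j => (hV j).update _ _) j (setMatch_update_image_union_diff S T₂)) hS⟩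

end Paper.MSO

open Paper

/-- If `I` is an interval of the labelled linear ordering `M = (A, <, P₁, …, Pₙ)`
and `Q ⊆ A` is MSO-definable in `M`, then `Q ∩ I` is MSO-definable in the
substructure `M_I`. -/
theorem stmt_6 {A : Type} [LinearOrder A] {n : ℕ} (P : Fin n → Set A)
    (I : Set A) (hI : I.OrdConnected) (Q : Set A)
    (hQ : MSO.Definable (fun x y : A => x < y) P Q) :
    MSO.Definable (subRel (fun x y : A => x < y) I) (subPred P I)
      {x : I | (x : A) ∈ Q} := by
  obtain ⟨φ, hφ₁, hφ₂, hφ⟩ := hQ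
  have hmem : ∀ a, a ∈ Q ↔ MSO.Sat (· < ·) P (fun _ => a) (fun _ => ∅) φ :=
    fun a => (hφ a).trans (MSO.forall_sat_update_iff hφ₁ hφ₂ a)
  refine MSO.definable_of_typeOf_eq (MSO.qd φ) fun b₀ b hb₀ htp => (hmem b).2 ?_
  exact MSO.sat_of_typeOf_eq hI φ le_rfl htp (fun _ => .inl ⟨0, one_pos, rfl, rfl⟩)
    (fun _ => .inr ⟨rfl, Set.empty_disjoint I⟩) ((hmem b₀).1 hb₀)
end
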